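/- Assume c ∈ (0,1) and C0 ≥ 1 are constants such that |K_{w'}(i)| ≤ C0·binom(n,w')·(1 − 2w'/n)^i for all integers 0 ≤ w' ≤ c·n and 0 ≤ i ≤ n/2. Let C be an [n,k] linear binary code with generator matrix G and dual distance d⊥ < n/2; set t⊥ = ⌊(d⊥−1)/2⌋. Let w be an integer with 0 ≤ w ≤ c·n, ε > 0, and let Z be a random vector on F_2^n with pmf P_Z satisfying d_TV(P_{GZ}, U_k) ≤ ε. Then the average absolute bias over all error vectors of weight w satisfies (1/binom(n,w))·Σ_{e : |e| = w} |bias(e·Z)| ≤ sqrt(|C⊥|·V_n(t⊥)/2^{n+1}) + (sqrt(C0·n)/2)·(1 − 2w/n)^{t⊥/2} + sqrt(ε/2). -/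

import Mathlib

/-
Rescale `P` on each fibre of `z ↦ G z` so that its pushforward becomes exactly uniform. The
rescaled `R` is within total variation `ε` of `P`, which moves every bias by at most
`min ε (1/2) ≤ √(ε/2)`, and it has collision probability `∑ R² ≤ 2⁻ᵏ`.

For `R`, the character sum of the weight-`w` sphere at `x` is `K_w(|x|)`, so the squared biases
over the sphere add up to `¼ ∑ₓ (R ⋆ R)(x) K_w(|x|)`. Every autocorrelation value `(R ⋆ R)(x)` is at
most `2⁻ᵏ`, so the at most `2 V_n(t)` vectors of weight `≤ t` or `≥ n - t` contribute at most
`2 V_n(t) 2⁻ᵏ binom(n,w)`; on the others, the hypothesis on `K_w` and the symmetry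
`|K_w(n - i)| = |K_w(i)|` give `|K_w| ≤ C0 binom(n,w) (1 - 2w/n)^t`, and the autocorrelation has
total mass `1`. Cauchy–Schwarz turns this into a bound on the average of `|bias|`, and
`|C⊥| = 2^(n-k)` rewrites `2⁻ᵏ` in the form of the statement.
-/
open Finset Filter
open scoped Classical BigOperators Topology

abbrev BV (n : ℕ) := Fin n → ZMod 2

def wt {n : ℕ} (x : BV n) : ℕ := (Finset.univ.filter (fun i => x i ≠ 0)).card

def dotp {n : ℕ} (x y : BV n) : ZMod 2 := ∑ i, x i * y i

def IsPMF {α : Type*} [Fintype α] (P : α → ℝ) : Prop :=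
  (∀ x, 0 ≤ P x) ∧ ∑ x, P x = 1

noncomputable def dTV {α : Type*} [Fintype α] (P Q : α → ℝ) : ℝ :=
  (1/2) * ∑ x, |P x - Q x|

noncomputable def unif (α : Type*) [Fintype α] : α → ℝ := fun _ => 1 / (Fintype.card α)

noncomputable def unifOn {α : Type*} [Fintype α] (S : Set α) : α → ℝ :=
  fun x => if x ∈ S then 1 / (Nat.card S) else 0

noncomputable def conv {n : ℕ} (P Q : BV n → ℝ) : BV n → ℝ :=
  fun x => ∑ y, P y * Q (x - y)

noncomputable def FT {n : ℕ} (f : BV n → ℝ) : BV n → ℝ :=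
  fun y => (1 / 2^n) * ∑ x, f x * (if dotp x y = 0 then (1:ℝ) else -1)

noncomputable def Kraw (n w i : ℕ) : ℝ :=
  ∑ j ∈ Finset.range (w+1), (-1:ℝ)^j * (Nat.choose i j) * (Nat.choose (n-i) (w-j))

def Vball (n t : ℕ) : ℕ := ∑ j ∈ Finset.range (t+1), Nat.choose n j

noncomputable def pmfMap {m n : ℕ} (G : Matrix (Fin m) (Fin n) (ZMod 2)) (P : BV n → ℝ) :
    BV m → ℝ :=
  fun u => ∑ z ∈ Finset.univ.filter (fun z => G.mulVec z = u), P z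

noncomputable def biasOf {n : ℕ} (e : BV n) (P : BV n → ℝ) : ℝ :=
  1/2 - ∑ z ∈ Finset.univ.filter (fun z => dotp e z = 1), P z

noncomputable def bitPMF {n : ℕ} (e : BV n) (P : BV n → ℝ) : ZMod 2 → ℝ :=
  fun b => ∑ z ∈ Finset.univ.filter (fun z => dotp e z = b), P z

noncomputable def jointPMF {m n : ℕ} (G : Matrix (Fin m) (Fin n) (ZMod 2)) (e : BV n)
    (P : BV n → ℝ) : BV m × ZMod 2 → ℝ :=
  fun p => ∑ z ∈ Finset.univ.filter (fun z => G.mulVec z = p.1 ∧ dotp e z = p.2), P z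

noncomputable def prodPMF {m : ℕ} (Pb : ZMod 2 → ℝ) : BV m × ZMod 2 → ℝ :=
  fun p => (1 / 2^m) * Pb p.2

def dualSet {n : ℕ} (C : Set (BV n)) : Set (BV n) := {y | ∀ c ∈ C, dotp y c = 0}

def rowSpan {k n : ℕ} (G : Matrix (Fin k) (Fin n) (ZMod 2)) : Submodule (ZMod 2) (BV n) :=
  Submodule.span (ZMod 2) (Set.range (fun i => G i))

lemma Finset.union_inter_eq_and_union_sdiff_eq {α : Type*} [DecidableEq α] {A B s : Finset α}
    (hA : A ⊆ s) (hB : Disjoint B s) : (A ∪ B) ∩ s = A ∧ (A ∪ B) \ s = B := by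
  rw [union_inter_distrib_right, inter_eq_left.2 hA, disjoint_iff_inter_eq_empty.1 hB, union_empty,
    union_sdiff_distrib, sdiff_eq_empty_iff_subset.2 hA, sdiff_eq_self_of_disjoint hB, empty_union]
  exact ⟨rfl, rfl⟩

lemma card_filter_powersetCard_card_inter {α : Type*} [DecidableEq α] {s u : Finset α}
    (hsu : s ⊆ u) {w j : ℕ} (hj : j ≤ w) :
    #((u.powersetCard w).filter (fun E => #(E ∩ s) = j))
      = (#s).choose j * (#u - #s).choose (w - j) := by
  rw [← card_sdiff_of_subset hsu, ← card_powersetCard, ← card_powersetCard, ← card_product]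
  refine Finset.card_nbij' (fun E => (E ∩ s, E \ s)) (fun p => p.1 ∪ p.2) ?_ ?_ ?_ ?_
  · intro E hE
    simp only [coe_filter, mem_powersetCard, Set.mem_ofPred_eq] at hE
    have := card_inter_add_card_sdiff E s
    simp only [coe_product, Set.mem_prod, mem_coe, mem_powersetCard]
    refine ⟨⟨inter_subset_right, hE.2⟩, sdiff_subset_sdiff hE.1.1 le_rfl, by omega⟩
  · rintro ⟨A, B⟩ hAB
    simp only [coe_product, Set.mem_prod, mem_coe, mem_powersetCard, subset_sdiff] at hAB
    obtain ⟨⟨hAs, hA⟩, ⟨hBu, hBs⟩, hB⟩ := hAB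
    have hAB : Disjoint A B := hBs.symm.mono_left hAs
    simp only [coe_filter, mem_powersetCard, Set.mem_ofPred_eq, card_union_of_disjoint hAB]
    refine ⟨⟨union_subset (hAs.trans hsu) hBu, by omega⟩, ?_⟩
    rw [(union_inter_eq_and_union_sdiff_eq hAs hBs).1, hA]
  · intro E _
    exact (union_comm _ _).trans (sdiff_union_inter E s)
  · rintro ⟨A, B⟩ hAB
    simp only [coe_product, Set.mem_prod, mem_coe, mem_powersetCard, subset_sdiff] at hAB
    obtain ⟨hint, hsdiff⟩ := union_inter_eq_and_union_sdiff_eq hAB.1.1 hAB.2.1.2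
    exact Prod.ext hint hsdiff

lemma sum_mul_le_of_le_on_of_le_off {α : Type*} [Fintype α] {h g : α → ℝ} {S : Finset α}
    {a b M : ℝ} (h0 : ∀ x, 0 ≤ h x) (ha : ∀ x ∈ S, h x ≤ a) (hb : ∀ x ∈ S, g x ≤ b) (hb0 : 0 ≤ b)
    (hM : ∀ x ∉ S, g x ≤ M) (hM0 : 0 ≤ M) :
    ∑ x, h x * g x ≤ #S * (a * b) + M * ∑ x, h x := by
  have hpt : ∀ x, h x * g x ≤ (if x ∈ S then a * b else 0) + h x * M := fun x => by
    by_cases hx : x ∈ S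
    · rw [if_pos hx]
      nlinarith [h0 x, ha x hx, hb x hx, mul_nonneg (h0 x) hM0]
    · rw [if_neg hx, zero_add]
      exact mul_le_mul_of_nonneg_left (hM x hx) (h0 x)
  refine (sum_le_sum fun x _ => hpt x).trans_eq ?_
  rw [sum_add_distrib, sum_ite_mem, univ_inter, sum_const, nsmul_eq_mul, ← sum_mul, mul_comm M]

lemma Finset.sum_abs_div_card_le_sqrt {ι : Type*} (s : Finset ι) (f : ι → ℝ) :
    (∑ i ∈ s, |f i|) / #s ≤ √((∑ i ∈ s, f i ^ 2) / #s) := by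
  refine Real.le_sqrt_of_sq_le ?_
  simpa only [sq_abs] using sum_div_card_sq_le_sum_sq_div_card (s := s) (f := fun i => |f i|)

lemma Real.sqrt_add_le_add_sqrt {x y : ℝ} (hx : 0 ≤ x) (hy : 0 ≤ y) : √(x + y) ≤ √x + √y := by
  rw [Real.sqrt_le_left (by positivity)]
  nlinarith [Real.sq_sqrt hx, Real.sq_sqrt hy, Real.sqrt_nonneg x, Real.sqrt_nonneg y]

lemma min_le_sqrt_div_two {ε : ℝ} (hε : 0 ≤ ε) : min ε (1 / 2) ≤ √(ε / 2) := by
  rw [Real.le_sqrt (le_min hε (by norm_num)) (by positivity)]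
  rcases le_total ε (1 / 2) with h | h
  · rw [min_eq_left h]; nlinarith
  · rw [min_eq_right h]; linarith

lemma dTV_nonneg {α : Type*} [Fintype α] (P Q : α → ℝ) : 0 ≤ dTV P Q :=
  mul_nonneg (by norm_num) (sum_nonneg fun x _ => abs_nonneg _)

lemma Matrix.mulVec_surjective_of_rank_eq {K m n : Type*} [Field K] [Fintype m] [Fintype n]
    (A : Matrix m n K) (hA : A.rank = Fintype.card m) : Function.Surjective A.mulVec := by
  have hrange : LinearMap.range A.mulVecLin = ⊤ :=
    Submodule.eq_top_of_finrank_eq (by rw [Module.finrank_fintype_fun_eq_card]; exact hA)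
  exact LinearMap.range_eq_top.1 hrange

section FiberRescale

variable {α β : Type*} [Fintype α] [DecidableEq β] (f : α → β)

def pushforward (P : α → ℝ) (u : β) : ℝ := ∑ z ∈ univ.filter (fun z => f z = u), P z

noncomputable def fiberRescale (P : α → ℝ) (Q : β → ℝ) (z : α) : ℝ :=
  if pushforward f P (f z) = 0 then Q (f z) / #(univ.filter (fun y => f y = f z))
  else P z * (Q (f z) / pushforward f P (f z))

variable {f} {P : α → ℝ} {Q : β → ℝ}

lemma sum_pushforward [Fintype β] (P : α → ℝ) : ∑ u, pushforward f P u = ∑ z, P z :=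
  sum_fiberwise univ f P

lemma sum_sq_le_sum_sq_pushforward [Fintype β] (hP : ∀ z, 0 ≤ P z) :
    ∑ z, P z ^ 2 ≤ ∑ u, pushforward f P u ^ 2 := by
  rw [← sum_fiberwise univ f (P · ^ 2)]
  refine sum_le_sum fun u _ => ?_
  rw [pushforward, sq (∑ z ∈ _, P z), sum_mul]
  refine sum_le_sum fun z hz => ?_
  rw [sq]
  exact mul_le_mul_of_nonneg_left (single_le_sum (fun y _ => hP y) hz) (hP z)

lemma card_fiber_pos (hf : Function.Surjective f) (u : β) :
    (0 : ℝ) < #(univ.filter (fun z => f z = u)) := by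
  obtain ⟨z, rfl⟩ := hf u
  exact_mod_cast card_pos.2 ⟨z, by simp⟩

lemma fiberRescale_nonneg (hP : ∀ z, 0 ≤ P z) (hQ : ∀ u, 0 ≤ Q u) (z : α) :
    0 ≤ fiberRescale f P Q z := by
  have hpush : 0 ≤ pushforward f P (f z) := sum_nonneg fun y _ => hP y
  unfold fiberRescale
  split_ifs
  · exact div_nonneg (hQ _) (Nat.cast_nonneg _)
  · exact mul_nonneg (hP z) (div_nonneg (hQ _) hpush)

lemma fiberRescale_of_apply_eq {u : β} {z : α} (hz : f z = u) :
    fiberRescale f P Q z = if pushforward f P u = 0 then Q u / #(univ.filter (fun y => f y = u))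
      else P z * (Q u / pushforward f P u) := by
  subst hz; rfl

lemma pushforward_fiberRescale (hf : Function.Surjective f) (u : β) :
    pushforward f (fiberRescale f P Q) u = Q u := by
  have hfib : ∀ z ∈ univ.filter (fun z => f z = u), f z = u := fun z hz => (mem_filter.1 hz).2
  unfold pushforward
  rw [sum_congr rfl fun z hz => fiberRescale_of_apply_eq (hfib z hz)]
  split_ifs with h
  · rw [sum_const, nsmul_eq_mul, mul_div_cancel₀ _ (card_fiber_pos hf u).ne']
  · rw [← sum_mul, ← pushforward, mul_div_cancel₀ _ h]

lemma sum_abs_sub_fiberRescale [Fintype β] (hf : Function.Surjective f) (hP : ∀ z, 0 ≤ P z)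
    (hQ : ∀ u, 0 ≤ Q u) :
    ∑ z, |P z - fiberRescale f P Q z| = ∑ u, |pushforward f P u - Q u| := by
  rw [← sum_fiberwise univ f]
  refine sum_congr rfl fun u _ => ?_
  have hfib : ∀ z ∈ univ.filter (fun z => f z = u), f z = u := fun z hz => (mem_filter.1 hz).2
  rw [sum_congr rfl fun z hz => by rw [fiberRescale_of_apply_eq (hfib z hz)]]
  split_ifs with h
  · have hzero : ∀ z ∈ univ.filter (fun z => f z = u), P z = 0 :=
      (sum_eq_zero_iff_of_nonneg fun z _ => hP z).1 h
    rw [sum_congr rfl fun z hz => by rw [hzero z hz, zero_sub, abs_neg], sum_const, nsmul_eq_mul,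
      h, zero_sub, abs_neg, abs_of_nonneg (hQ u),
      abs_of_nonneg (div_nonneg (hQ u) (Nat.cast_nonneg _)), mul_div_cancel₀ _ (card_fiber_pos hf u).ne']
  · have hpos : 0 < pushforward f P u := (sum_nonneg fun z _ => hP z).lt_of_ne' h
    calc ∑ z ∈ univ.filter (fun z => f z = u), |P z - P z * (Q u / pushforward f P u)|
        = ∑ z ∈ univ.filter (fun z => f z = u), P z * |1 - Q u / pushforward f P u| :=
          sum_congr rfl fun z _ => by rw [← mul_one_sub, abs_mul, abs_of_nonneg (hP z)]
      _ = |pushforward f P u * (1 - Q u / pushforward f P u)| := by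
          rw [abs_mul, abs_of_pos hpos, ← sum_mul, ← pushforward]
      _ = |pushforward f P u - Q u| := by rw [mul_one_sub, mul_div_cancel₀ _ h]

end FiberRescale

noncomputable def chi (b : ZMod 2) : ℝ := if b = 0 then 1 else -1

lemma ZMod.two_cases (b : ZMod 2) : b = 0 ∨ b = 1 := by
  revert b; decide

lemma chi_add (a b : ZMod 2) : chi (a + b) = chi a * chi b := by
  rcases a.two_cases with rfl | rfl <;> rcases b.two_cases with rfl | rfl <;>
    simp [chi, show (1 + 1 : ZMod 2) = 0 from rfl]

lemma abs_chi (b : ZMod 2) : |chi b| = 1 := by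
  rcases b.two_cases with rfl | rfl <;> simp [chi]

lemma mul_chi_eq (x : ℝ) (b : ZMod 2) : x * chi b = x - 2 * if b = 1 then x else 0 := by
  rcases b.two_cases with rfl | rfl <;> simp [chi]
  ring

lemma chi_natCast (m : ℕ) : chi m = (-1) ^ m := by
  rcases Nat.even_or_odd m with h | h
  · rw [chi, if_pos ((ZMod.natCast_eq_zero_iff_even).2 h), h.neg_one_pow]
  · rw [chi, if_neg (ZMod.natCast_eq_zero_iff_even.not.2 (Nat.not_even_iff_odd.2 h)),
      h.neg_one_pow]

lemma dotp_add_right {n : ℕ} (e x y : BV n) : dotp e (x + y) = dotp e x + dotp e y :=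
  dotProduct_add e x y

section Bias

variable {n : ℕ} (e : BV n) {P Q : BV n → ℝ}

lemma biasOf_eq_sum_mul_chi (hP : ∑ z, P z = 1) :
    biasOf e P = (∑ z, P z * chi (dotp e z)) / 2 := by
  simp only [mul_chi_eq, Finset.sum_sub_distrib, ← Finset.mul_sum, ← Finset.sum_filter, hP, biasOf]
  ring

lemma abs_biasOf_sub_le (hP : ∑ z, P z = 1) (hQ : ∑ z, Q z = 1) :
    |biasOf e P - biasOf e Q| ≤ dTV P Q := by
  rw [biasOf_eq_sum_mul_chi e hP, biasOf_eq_sum_mul_chi e hQ, ← sub_div, ← Finset.sum_sub_distrib,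
    dTV, abs_div, abs_two]
  calc |∑ z, (P z * chi (dotp e z) - Q z * chi (dotp e z))| / 2
      ≤ (∑ z, |P z - Q z|) / 2 := by
        gcongr
        refine (Finset.abs_sum_le_sum_abs _ _).trans (le_of_eq ?_)
        simp only [← sub_mul, abs_mul, abs_chi, mul_one]
    _ = _ := by ring

lemma abs_biasOf_le_half (hP : IsPMF P) : |biasOf e P| ≤ 1 / 2 := by
  rw [biasOf_eq_sum_mul_chi e hP.2, abs_div, abs_two]
  gcongr
  calc |∑ z, P z * chi (dotp e z)| ≤ ∑ z, |P z * chi (dotp e z)| := Finset.abs_sum_le_sum_abs _ _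
    _ = 1 := by simp only [abs_mul, abs_chi, mul_one, abs_of_nonneg (hP.1 _), hP.2]

lemma abs_biasOf_le_abs_biasOf_add_min (hP : IsPMF P) (hQ : ∑ z, Q z = 1) :
    |biasOf e P| ≤ |biasOf e Q| + min (dTV P Q) (1 / 2) := by
  rw [← min_add_add_left]
  refine le_min ?_ ((abs_biasOf_le_half e hP).trans (le_add_of_nonneg_left (abs_nonneg _)))
  linarith [abs_sub_abs_le_abs_sub (biasOf e P) (biasOf e Q), abs_biasOf_sub_le e hP.2 hQ]

end Bias

section Weight

variable {n : ℕ}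

def supp (x : BV n) : Finset (Fin n) := univ.filter (fun i => x i ≠ 0)

def ind (E : Finset (Fin n)) : BV n := fun i => if i ∈ E then 1 else 0

lemma wt_eq_card_supp (x : BV n) : wt x = #(supp x) := rfl

lemma supp_ind (E : Finset (Fin n)) : supp (ind E) = E := by
  ext i; by_cases h : i ∈ E <;> simp [supp, ind, h]

lemma ind_supp (x : BV n) : ind (supp x) = x := by
  funext i; rcases (x i).two_cases with h | h <;> simp [ind, supp, h]

lemma sum_filter_wt_eq {M : Type*} [AddCommMonoid M] (w : ℕ) (f : BV n → M) :
    ∑ e ∈ univ.filter (fun e : BV n => wt e = w), f e = ∑ E ∈ powersetCard w univ, f (ind E) := by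
  refine Finset.sum_nbij' supp ind (fun e he => ?_) (fun E hE => ?_) (fun e _ => ind_supp e)
    (fun E _ => supp_ind E) (fun e _ => by rw [ind_supp])
  · rw [mem_filter, wt_eq_card_supp] at he
    exact mem_powersetCard_univ.2 he.2
  · rw [mem_filter, wt_eq_card_supp, supp_ind]
    exact ⟨mem_univ _, mem_powersetCard_univ.1 hE⟩

lemma card_filter_wt_eq (w : ℕ) : #(univ.filter (fun x : BV n => wt x = w)) = n.choose w := by
  rw [card_eq_sum_ones, sum_filter_wt_eq, sum_const, card_powersetCard, card_univ,
    Fintype.card_fin, smul_eq_mul, mul_one]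

lemma dotp_ind (E : Finset (Fin n)) (x : BV n) : dotp (ind E) x = #(E ∩ supp x) := by
  have h : ∀ i, ind E i * x i = if i ∈ E ∩ supp x then 1 else 0 := by
    intro i
    rcases (x i).two_cases with hx | hx <;> by_cases hE : i ∈ E <;> simp [ind, supp, hE, hx]
  simp only [dotp, h, Finset.sum_boole, Finset.filter_mem_eq_inter, univ_inter]

lemma wt_pos {x : BV n} (hx : x ≠ 0) : 0 < wt x := by
  obtain ⟨i, hi⟩ := Function.ne_iff.1 hx
  exact card_pos.2 ⟨i, mem_filter.2 ⟨mem_univ i, hi⟩⟩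

lemma wt_add_one (x : BV n) : wt (x + 1) = n - wt x := by
  have hsupp : supp (x + 1) = (supp x)ᶜ := by
    ext i
    rcases (x i).two_cases with h | h <;> simp [supp, h, show (1 + 1 : ZMod 2) = 0 from rfl]
  rw [wt_eq_card_supp, hsupp, card_compl, Fintype.card_fin, ← wt_eq_card_supp]

lemma card_filter_wt_le (t : ℕ) : #(univ.filter (fun x : BV n => wt x ≤ t)) = Vball n t := by
  rw [card_eq_sum_card_fiberwise (f := wt) (t := range (t + 1))
    (fun x hx => mem_range_succ_iff.2 (mem_filter.1 hx).2), Vball]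
  refine sum_congr rfl fun j hj => ?_
  rw [← card_filter_wt_eq j, filter_filter]
  congr 1
  exact filter_congr fun x _ => ⟨fun h => h.2, fun h => ⟨h ▸ mem_range_succ_iff.1 hj, h⟩⟩

lemma card_filter_le_wt_le (t : ℕ) : #(univ.filter (fun x : BV n => n - t ≤ wt x)) ≤ Vball n t := by
  rw [← card_filter_wt_le]
  refine card_le_card_of_injOn (· + 1) (fun x hx => ?_) (fun x _ y _ h => add_right_cancel h)
  simp only [coe_filter, mem_univ, true_and, Set.mem_ofPred_eq] at hx ⊢
  rw [wt_add_one]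
  omega

lemma card_filter_wt_le_or_le_wt_le (t : ℕ) :
    #(univ.filter (fun x : BV n => wt x ≤ t ∨ n - t ≤ wt x)) ≤ 2 * Vball n t := by
  rw [filter_or, two_mul]
  exact (card_union_le _ _).trans (add_le_add (card_filter_wt_le t).le (card_filter_le_wt_le t))

end Weight

section Krawtchouk

variable {n : ℕ}

theorem sum_filter_wt_eq_chi_dotp (w : ℕ) (x : BV n) :
    ∑ e ∈ univ.filter (fun e : BV n => wt e = w), chi (dotp e x) = Kraw n w (wt x) := by
  rw [sum_filter_wt_eq, Kraw, wt_eq_card_supp]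
  have hmaps : ∀ E ∈ powersetCard w (univ : Finset (Fin n)), #(E ∩ supp x) ∈ range (w + 1) := by
    intro E hE
    rw [mem_powersetCard_univ] at hE
    exact mem_range_succ_iff.2 (hE ▸ card_le_card inter_subset_left)
  rw [← sum_fiberwise_of_maps_to hmaps]
  refine sum_congr rfl fun j hj => ?_
  have hsign : ∀ E ∈ (powersetCard w univ).filter (fun E => #(E ∩ supp x) = j),
      chi (dotp (ind E) x) = (-1) ^ j := by
    intro E hE
    rw [dotp_ind, chi_natCast, (mem_filter.1 hE).2]
  rw [sum_congr rfl hsign, sum_const, nsmul_eq_mul,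
    card_filter_powersetCard_card_inter (subset_univ _) (mem_range_succ_iff.1 hj), card_univ,
    Fintype.card_fin]
  push_cast
  ring

lemma abs_kraw_wt_le (w : ℕ) (x : BV n) : |Kraw n w (wt x)| ≤ n.choose w := by
  rw [← sum_filter_wt_eq_chi_dotp]
  refine (abs_sum_le_sum_abs _ _).trans_eq ?_
  simp only [abs_chi, sum_const, card_filter_wt_eq, nsmul_eq_mul, mul_one]

lemma kraw_sub {w i : ℕ} (hi : i ≤ n) : Kraw n w (n - i) = (-1) ^ w * Kraw n w i := by
  rw [Kraw, Kraw, mul_sum, ← sum_range_reflect]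
  refine sum_congr rfl fun j hj => ?_
  rw [mem_range_succ_iff] at hj
  rw [show w + 1 - 1 - j = w - j by omega, Nat.sub_sub_self hi, Nat.sub_sub_self hj]
  have hsign : (-1 : ℝ) ^ (w - j) = (-1) ^ w * (-1) ^ j := by
    rw [← pow_add, show w + j = w - j + 2 * j by omega, pow_add, pow_mul]
    norm_num
  rw [hsign]
  ring

lemma abs_kraw_sub {w i : ℕ} (hi : i ≤ n) : |Kraw n w (n - i)| = |Kraw n w i| := by
  rw [kraw_sub hi, abs_mul, abs_pow, abs_neg, abs_one, one_pow, one_mul]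

lemma abs_kraw_le_of_le_of_le {w t i : ℕ} {C β : ℝ}
    (hK : ∀ i : ℕ, (i : ℝ) ≤ n / 2 → |Kraw n w i| ≤ C * β ^ i) (hC : 0 ≤ C) (hβ0 : 0 ≤ β)
    (hβ1 : β ≤ 1) (hti : t ≤ i) (hit : i ≤ n - t) : |Kraw n w i| ≤ C * β ^ t := by
  have hmono : ∀ j, t ≤ j → C * β ^ j ≤ C * β ^ t := fun j hj =>
    mul_le_mul_of_nonneg_left (pow_le_pow_of_le_one hβ0 hβ1 hj) hC
  have half : ∀ j : ℕ, 2 * j ≤ n → (j : ℝ) ≤ n / 2 := fun j hj => by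
    rw [le_div_iff₀ two_pos]
    exact_mod_cast (by omega : j * 2 ≤ n)
  rcases le_total (2 * i) n with h | h
  · exact (hK i (half i h)).trans (hmono i hti)
  · rw [← Nat.sub_sub_self (hit.trans (Nat.sub_le n t)), abs_kraw_sub (Nat.sub_le _ _)]
    exact (hK _ (half _ (by omega))).trans (hmono _ (by omega))

end Krawtchouk

section Convolution

variable {n : ℕ} (R : BV n → ℝ)

lemma sum_sum_mul_apply_add (g : BV n → ℝ) :
    ∑ z, ∑ z', R z * R z' * g (z + z') = ∑ x, conv R R x * g x := by
  simp only [conv, sum_mul]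
  rw [sum_comm (s := univ) (t := univ) (f := fun x y => R y * R (x - y) * g x)]
  refine sum_congr rfl fun z _ => ?_
  exact Fintype.sum_equiv (Equiv.addLeft z) _ _ fun z' => by simp

lemma conv_nonneg (hR : ∀ z, 0 ≤ R z) (x : BV n) : 0 ≤ conv R R x :=
  sum_nonneg fun y _ => mul_nonneg (hR y) (hR _)

lemma conv_le_sum_sq (x : BV n) : conv R R x ≤ ∑ z, R z ^ 2 := by
  have hshift : ∑ y, R (x - y) ^ 2 = ∑ z, R z ^ 2 := (Equiv.subLeft x).sum_comp (R · ^ 2)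
  calc conv R R x ≤ ∑ y, (R y ^ 2 + R (x - y) ^ 2) / 2 :=
        sum_le_sum fun y _ => by nlinarith [sq_nonneg (R y - R (x - y))]
    _ = ∑ z, R z ^ 2 := by rw [← sum_div, sum_add_distrib, hshift]; ring

lemma sum_conv (Q : BV n → ℝ) : ∑ x, conv R Q x = (∑ z, R z) * ∑ z, Q z := by
  simp only [conv]
  rw [sum_comm, sum_mul]
  refine sum_congr rfl fun y _ => ?_
  rw [← mul_sum, show ∑ x, Q (x - y) = ∑ z, Q z from (Equiv.subRight y).sum_comp Q]

theorem sum_filter_wt_eq_sq_sum_mul_chi (w : ℕ) :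
    ∑ e ∈ univ.filter (fun e : BV n => wt e = w), (∑ z, R z * chi (dotp e z)) ^ 2
      = ∑ x, conv R R x * Kraw n w (wt x) := by
  have hsq : ∀ e : BV n, (∑ z, R z * chi (dotp e z)) ^ 2
      = ∑ z, ∑ z', R z * R z' * chi (dotp e (z + z')) := fun e => by
    rw [sq, sum_mul_sum]
    exact sum_congr rfl fun z _ => sum_congr rfl fun z' _ => by
      rw [dotp_add_right, chi_add]; ring
  rw [sum_congr rfl fun e _ => hsq e, sum_comm, ← sum_sum_mul_apply_add]
  refine sum_congr rfl fun z _ => ?_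
  rw [sum_comm]
  exact sum_congr rfl fun z' _ => by rw [← mul_sum, sum_filter_wt_eq_chi_dotp]

end Convolution

section Smoothed

variable {n : ℕ} {R : BV n → ℝ}

lemma sum_filter_wt_eq_biasOf_sq (w : ℕ) (hR : ∑ z, R z = 1) :
    ∑ e ∈ univ.filter (fun e : BV n => wt e = w), biasOf e R ^ 2
      = (∑ x, conv R R x * Kraw n w (wt x)) / 4 := by
  rw [← sum_filter_wt_eq_sq_sum_mul_chi, sum_div]
  exact sum_congr rfl fun e _ => by rw [biasOf_eq_sum_mul_chi e hR]; ring

lemma sum_conv_mul_kraw_wt_le {w t : ℕ} {s M : ℝ} (hR0 : ∀ z, 0 ≤ R z) (hR1 : ∑ z, R z = 1)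
    (hs : ∑ z, R z ^ 2 ≤ s) (hM0 : 0 ≤ M)
    (hmid : ∀ i, t ≤ i → i ≤ n - t → |Kraw n w i| ≤ M) :
    ∑ x, conv R R x * Kraw n w (wt x) ≤ 2 * Vball n t * s * n.choose w + M := by
  set S := univ.filter (fun x : BV n => wt x ≤ t ∨ n - t ≤ wt x)
  have hS : (#S : ℝ) ≤ 2 * Vball n t := by exact_mod_cast card_filter_wt_le_or_le_wt_le t
  have hs0 : 0 ≤ s := (sum_nonneg fun z _ => sq_nonneg (R z)).trans hs
  have hbound := sum_mul_le_of_le_on_of_le_off (S := S) (conv_nonneg R hR0)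
    (fun x _ => (conv_le_sum_sq R x).trans hs)
    (fun x _ => (le_abs_self _).trans (abs_kraw_wt_le w x)) (Nat.cast_nonneg _)
    (fun x hx => (le_abs_self _).trans <| by
      simp only [S, mem_filter, mem_univ, true_and, not_or, not_le] at hx
      exact hmid _ hx.1.le hx.2.le) hM0
  rw [sum_conv, hR1, one_mul, mul_one] at hbound
  calc _ ≤ #S * (s * n.choose w) + M := hbound
    _ ≤ 2 * Vball n t * (s * n.choose w) + M :=
        add_le_add_left (mul_le_mul_of_nonneg_right hS (mul_nonneg hs0 (Nat.cast_nonneg _))) M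
    _ = 2 * Vball n t * s * n.choose w + M := by ring

theorem sum_abs_biasOf_div_choose_le {w t : ℕ} {s C β : ℝ} (hw : w ≤ n) (hR0 : ∀ z, 0 ≤ R z)
    (hR1 : ∑ z, R z = 1) (hs : ∑ z, R z ^ 2 ≤ s) (hC : 0 ≤ C) (hβ : 0 ≤ β)
    (hmid : ∀ i, t ≤ i → i ≤ n - t → |Kraw n w i| ≤ C * n.choose w * β ^ t) :
    (∑ e ∈ univ.filter (fun e : BV n => wt e = w), |biasOf e R|) / n.choose w
      ≤ √(Vball n t * s / 2) + √C / 2 * √(β ^ t) := by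
  have hN : (0 : ℝ) < n.choose w := by exact_mod_cast Nat.choose_pos hw
  have hs0 : 0 ≤ s := (sum_nonneg fun z _ => sq_nonneg (R z)).trans hs
  have hsq := sum_conv_mul_kraw_wt_le hR0 hR1 hs (by positivity) hmid
  calc (∑ e ∈ univ.filter (fun e : BV n => wt e = w), |biasOf e R|) / n.choose w
      ≤ √((∑ e ∈ univ.filter (fun e : BV n => wt e = w), biasOf e R ^ 2) / n.choose w) := by
        have h := sum_abs_div_card_le_sqrt (univ.filter (fun e : BV n => wt e = w)) (biasOf · R)
        rwa [card_filter_wt_eq] at h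
    _ ≤ √((2 * Vball n t * s * n.choose w + C * n.choose w * β ^ t) / 4 / n.choose w) := by
        rw [sum_filter_wt_eq_biasOf_sq w hR1]
        gcongr
    _ = √(Vball n t * s / 2 + C * β ^ t / 4) := by
        congr 1
        field_simp
        ring
    _ ≤ √(Vball n t * s / 2) + √(C * β ^ t / 4) :=
        Real.sqrt_add_le_add_sqrt (by positivity) (by positivity)
    _ = √(Vball n t * s / 2) + √C / 2 * √(β ^ t) := by
        rw [Real.sqrt_div' _ (by norm_num : (0 : ℝ) ≤ 4), Real.sqrt_mul hC,
          show (4 : ℝ) = 2 ^ 2 by norm_num, Real.sqrt_sq (by norm_num)]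
        ring

end Smoothed

section Dual

variable {k n : ℕ} (G : Matrix (Fin k) (Fin n) (ZMod 2))

lemma dualSet_rowSpan : dualSet (rowSpan G : Set (BV n)) = LinearMap.ker G.mulVecLin := by
  ext y
  have hdual : y ∈ dualSet (rowSpan G : Set (BV n))
      ↔ rowSpan G ≤ LinearMap.ker (dotProductBilin (ZMod 2) (ZMod 2) y) :=
    Iff.rfl
  rw [SetLike.mem_coe, hdual, rowSpan, Submodule.span_le, LinearMap.mem_ker, Set.range_subset_iff]
  simp only [SetLike.mem_coe, LinearMap.mem_ker, dotProductBilin_apply_apply,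
    Matrix.mulVecLin_apply, funext_iff, Matrix.mulVec, dotProduct_comm y, Pi.zero_apply]

lemma card_dualSet_rowSpan (hrank : G.rank = k) :
    Nat.card (dualSet (rowSpan G : Set (BV n))) = 2 ^ (n - k) := by
  have hker : Module.finrank (ZMod 2) (LinearMap.ker G.mulVecLin) = n - k := by
    have h := LinearMap.finrank_range_add_finrank_ker G.mulVecLin
    rw [Module.finrank_fin_fun] at h
    change G.rank + _ = n at h
    omega
  rw [dualSet_rowSpan]
  change Nat.card (LinearMap.ker G.mulVecLin) = _
  rw [Nat.card_eq_fintype_card, Module.card_eq_pow_finrank (K := ZMod 2), ZMod.card, hker]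

end Dual

lemma unif_BV_apply (k : ℕ) (u : BV k) : unif (BV k) u = (2 ^ k)⁻¹ := by
  simp [unif]

theorem exists_isPMF_sum_sq_le_dTV_eq {k n : ℕ} (G : Matrix (Fin k) (Fin n) (ZMod 2))
    (hrank : G.rank = k) {P : BV n → ℝ} (hP : ∀ z, 0 ≤ P z) :
    ∃ R : BV n → ℝ, IsPMF R ∧ ∑ z, R z ^ 2 ≤ (2 ^ k)⁻¹ ∧
      dTV P R = dTV (pmfMap G P) (unif (BV k)) := by
  have hf : Function.Surjective G.mulVec :=
    G.mulVec_surjective_of_rank_eq (by rw [hrank, Fintype.card_fin])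
  have hQ : ∀ u, 0 ≤ unif (BV k) u := fun u => by rw [unif_BV_apply]; positivity
  have hR0 := fiberRescale_nonneg (f := G.mulVec) hP hQ
  have hpush := pushforward_fiberRescale (P := P) (Q := unif (BV k)) hf
  refine ⟨fiberRescale G.mulVec P (unif (BV k)), ⟨hR0, ?_⟩, ?_, ?_⟩
  · rw [← sum_pushforward (f := G.mulVec), funext hpush, Fintype.sum_congr _ _ (unif_BV_apply k)]
    simp
  · refine (sum_sq_le_sum_sq_pushforward (f := G.mulVec) hR0).trans_eq ?_
    simp only [hpush, unif_BV_apply, sum_const, card_univ, Fintype.card_fun, ZMod.card,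
      Fintype.card_fin, nsmul_eq_mul, Nat.cast_pow, Nat.cast_ofNat]
    field_simp
  · rw [dTV, dTV, sum_abs_sub_fiberRescale hf hP hQ]
    rfl

lemma one_div_choose_mul_sum_abs_biasOf_le {n : ℕ} (w : ℕ) (hw : w ≤ n) {P Q : BV n → ℝ}
    (hP : IsPMF P) (hQ : ∑ z, Q z = 1) :
    1 / (n.choose w : ℝ) * ∑ e ∈ univ.filter (fun e : BV n => wt e = w), |biasOf e P|
      ≤ (∑ e ∈ univ.filter (fun e : BV n => wt e = w), |biasOf e Q|) / n.choose w
          + min (dTV P Q) (1 / 2) := by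
  have hN : (0 : ℝ) < n.choose w := by exact_mod_cast Nat.choose_pos hw
  calc 1 / (n.choose w : ℝ) * ∑ e ∈ univ.filter (fun e : BV n => wt e = w), |biasOf e P|
      ≤ (∑ e ∈ univ.filter (fun e : BV n => wt e = w), (|biasOf e Q| + min (dTV P Q) (1 / 2)))
          / n.choose w := by
        rw [one_div_mul_eq_div]
        gcongr with e
        exact abs_biasOf_le_abs_biasOf_add_min e hP hQ
    _ = _ := by
        rw [sum_add_distrib, sum_const, card_filter_wt_eq, nsmul_eq_mul, add_div,
          mul_div_cancel_left₀ _ hN.ne']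

theorem average_bias_bound_general (n k : ℕ) (c C0 : ℝ)
    (hc : c ∈ Set.Ioo (0 : ℝ) 1) (hC0 : 1 ≤ C0)
    (hK : ∀ w i : ℕ, (w : ℝ) ≤ c * n → (i : ℝ) ≤ (n : ℝ) / 2 →
      |Kraw n w i| ≤ C0 * (n.choose w : ℝ) * (1 - 2 * w / n) ^ i)
    (G : Matrix (Fin k) (Fin n) (ZMod 2)) (hrank : G.rank = k)
    (dperp : ℕ)
    (hdperp : IsLeast
      {m : ℕ | ∃ y ∈ dualSet ((rowSpan G : Submodule (ZMod 2) (BV n)) : Set (BV n)),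
        y ≠ 0 ∧ wt y = m} dperp)
    (hdn : (dperp : ℝ) < (n : ℝ) / 2)
    (w : ℕ) (hw : (w : ℝ) ≤ c * n) (ε : ℝ)
    (P : BV n → ℝ) (hP : IsPMF P)
    (ht : dTV (pmfMap G P) (unif (BV k)) ≤ ε) :
    (1 / (n.choose w : ℝ)) * ∑ e ∈ Finset.univ.filter (fun e : BV n => wt e = w), |biasOf e P|
      ≤ Real.sqrt ((Nat.card (dualSet ((rowSpan G : Submodule (ZMod 2) (BV n)) : Set (BV n))) : ℝ)
            * (Vball n ((dperp - 1) / 2) : ℝ) / 2 ^ (n + 1))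
          + Real.sqrt (C0 * n) / 2 * Real.sqrt ((1 - 2 * w / n) ^ ((dperp - 1) / 2))
          + Real.sqrt (ε / 2) := by
  set t := (dperp - 1) / 2
  set β : ℝ := 1 - 2 * w / n
  obtain ⟨y, -, hy0, rfl⟩ := hdperp.1
  have hn : (2 : ℝ) < n := by
    have : (1 : ℝ) ≤ wt y := by exact_mod_cast wt_pos hy0
    linarith
  have hwn : w ≤ n := by exact_mod_cast hw.trans (by nlinarith [hc.2] : c * n ≤ n)
  -- the case `i = 1` of `hK` forces `1 - 2w/n ≥ 0`
  have hβ0 : 0 ≤ β := nonneg_of_mul_nonneg_right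
    (by simpa using (abs_nonneg _).trans (hK w 1 hw (by push_cast; linarith)))
    (by have := Nat.choose_pos hwn; positivity : 0 < C0 * n.choose w)
  have hβ1 : β ≤ 1 := sub_le_self 1 (by positivity)
  have hmid := fun i =>
    abs_kraw_le_of_le_of_le (t := t) (i := i) (hK w · hw) (by positivity) hβ0 hβ1
  obtain ⟨R, hR, hR2, hPR⟩ := exists_isPMF_sum_sq_le_dTV_eq G hrank hP.1
  have hkn : k ≤ n := hrank ▸ G.rank_le_width
  calc 1 / (n.choose w : ℝ) * ∑ e ∈ univ.filter (fun e : BV n => wt e = w), |biasOf e P|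
      ≤ (∑ e ∈ univ.filter (fun e : BV n => wt e = w), |biasOf e R|) / n.choose w
          + min (dTV P R) (1 / 2) := one_div_choose_mul_sum_abs_biasOf_le w hwn hP hR.2
    _ ≤ √(Vball n t * (2 ^ k)⁻¹ / 2) + √C0 / 2 * √(β ^ t) + √(dTV P R / 2) :=
        add_le_add (sum_abs_biasOf_div_choose_le hwn hR.1 hR.2 hR2 (by positivity) hβ0 hmid)
          (min_le_sqrt_div_two (dTV_nonneg P R))
    _ ≤ _ := by
        have hsplit : Vball n t * (2 ^ k : ℝ)⁻¹ / 2 = 2 ^ (n - k) * Vball n t / 2 ^ (n + 1) := by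
          rw [show n + 1 = n - k + (k + 1) by omega, pow_add]
          field_simp
          ring
        rw [card_dualSet_rowSpan G hrank, hsplit, hPR]
        push_cast
        gcongr
        nlinarith

theorem average_bias_bound (n k : ℕ) (c C0 : ℝ)
    (hc : c ∈ Set.Ioo (0 : ℝ) 1) (hC0 : 1 ≤ C0)
    (hK : ∀ w i : ℕ, (w : ℝ) ≤ c * n → (i : ℝ) ≤ (n : ℝ) / 2 →
      |Kraw n w i| ≤ C0 * (n.choose w : ℝ) * (1 - 2 * w / n) ^ i)
    (G : Matrix (Fin k) (Fin n) (ZMod 2)) (hrank : G.rank = k)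
    (dperp : ℕ)
    (hdperp : IsLeast
      {m : ℕ | ∃ y ∈ dualSet ((rowSpan G : Submodule (ZMod 2) (BV n)) : Set (BV n)),
        y ≠ 0 ∧ wt y = m} dperp)
    (hdn : (dperp : ℝ) < (n : ℝ) / 2)
    (w : ℕ) (hw : (w : ℝ) ≤ c * n) (ε : ℝ) (hε : 0 < ε)
    (P : BV n → ℝ) (hP : IsPMF P)
    (ht : dTV (pmfMap G P) (unif (BV k)) ≤ ε) :
    (1 / (n.choose w : ℝ)) * ∑ e ∈ Finset.univ.filter (fun e : BV n => wt e = w), |biasOf e P|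
      ≤ Real.sqrt ((Nat.card (dualSet ((rowSpan G : Submodule (ZMod 2) (BV n)) : Set (BV n))) : ℝ)
            * (Vball n ((dperp - 1) / 2) : ℝ) / 2 ^ (n + 1))
          + Real.sqrt (C0 * n) / 2 * Real.sqrt ((1 - 2 * w / n) ^ ((dperp - 1) / 2))
          + Real.sqrt (ε / 2) :=
  average_bias_bound_general n k c C0 hc hC0 hK G hrank dperp hdperp hdn w hw ε P hP ht
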